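/- The comprehensive similarity s^h(a,b) defined as a ratio with numerator ∑_j k_j s_j + ∑ z(s_j,s_ℓ) k_{jℓ} + ∑ z(s_j,|d_p|) k_{jp} and denominator K^h(a,b) = ∑_j k_j + ∑ z(s_j,s_ℓ) k_{jℓ} + ∑ z(s_j,|d_p|) k_{jp}, with z(x,y) = x·y, lies in [0,1], provided s_j ∈ [0,1] for all j, K^h(a,b) > 0, and the non-negativity condition k_j - ∑_{negative k_{jℓ}} |k_{jℓ}| - ∑ |k_{jp}| ≥ 0 holds for every j. -/

import Mathlib

/-!
`N ≤ K` because `k j * s j ≤ k j`. For `0 ≤ N`, bound each interaction term below by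
`-(s p.1 * |k_p|)` (only negative mutual coefficients contribute), using `s p.2, |d p.2| ≤ 1`.
Regrouping these lower bounds by the first index `j` of the pair turns the numerator into at
least `∑ j, s j * (k j - ∑_{p.1 = j} |k_p|)`, and every bracket is nonnegative by the
non-negativity condition.
-/

open Finset

section
variable {α : Type*} [Ring α] [LinearOrder α] [IsOrderedRing α]

lemma neg_mul_abs_le_mul {t u c : α} (ht : 0 ≤ t) (htu : t ≤ u) : -(u * |c|) ≤ t * c :=
  calc -(u * |c|) ≤ -(t * |c|) := neg_le_neg (mul_le_mul_of_nonneg_right htu (abs_nonneg c))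
    _ = t * -|c| := (mul_neg t |c|).symm
    _ ≤ t * c := mul_le_mul_of_nonneg_left (neg_abs_le c) ht

lemma neg_mul_negPart_le_mul {t u c : α} (ht : 0 ≤ t) (htu : t ≤ u) : -(u * c⁻) ≤ t * c := by
  rcases lt_or_ge c 0 with hc | hc
  · rw [negPart_eq_neg.2 hc.le, ← abs_of_neg hc]
    exact neg_mul_abs_le_mul ht htu
  · rw [negPart_eq_zero.2 hc, mul_zero, neg_zero]
    exact mul_nonneg ht hc

end

lemma Finset.sum_mul_eq_sum_mul_sum_fiberwise {ι κ R : Type*} [Fintype κ] [DecidableEq κ]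
    [NonUnitalNonAssocSemiring R] (P : Finset ι) (g : ι → κ) (w : κ → R) (f : ι → R) :
    ∑ p ∈ P, w (g p) * f p = ∑ j, w j * ∑ p ∈ P with g p = j, f p := by
  rw [← sum_fiberwise P g]
  refine sum_congr rfl fun j _ ↦ ?_
  rw [mul_sum]
  exact sum_congr rfl fun p hp ↦ by rw [(mem_filter.1 hp).2]

lemma sum_mul_add_interaction_sums_nonneg {ι : Type*} [Fintype ι] [DecidableEq ι] (k : ι → ℝ)
    (M O : Finset (ι × ι)) (kM kO : ι × ι → ℝ) (s : ι → ℝ) (hs : ∀ j, 0 ≤ s j ∧ s j ≤ 1)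
    (d : ι → ℝ) (hd : ∀ j, |d j| ≤ 1)
    (hbudget : ∀ j, ∑ p ∈ M with p.1 = j, (kM p)⁻ + ∑ p ∈ O with p.1 = j, |kO p| ≤ k j) :
    0 ≤ (∑ j, k j * s j) + (∑ p ∈ M, s p.1 * s p.2 * kM p)
        + (∑ p ∈ O, s p.1 * |d p.2| * kO p) := by
  have hM : ∀ p ∈ M, -(s p.1 * (kM p)⁻) ≤ s p.1 * s p.2 * kM p := fun p _ ↦
    neg_mul_negPart_le_mul (mul_nonneg (hs p.1).1 (hs p.2).1)
      (mul_le_of_le_one_right (hs p.1).1 (hs p.2).2)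
  have hO : ∀ p ∈ O, -(s p.1 * |kO p|) ≤ s p.1 * |d p.2| * kO p := fun p _ ↦
    neg_mul_abs_le_mul (mul_nonneg (hs p.1).1 (abs_nonneg _))
      (mul_le_of_le_one_right (hs p.1).1 (hd p.2))
  calc 0 ≤ ∑ j, s j * (k j - ∑ p ∈ M with p.1 = j, (kM p)⁻ - ∑ p ∈ O with p.1 = j, |kO p|) :=
        sum_nonneg fun j _ ↦ mul_nonneg (hs j).1 (by linarith [hbudget j])
    _ = ∑ j, k j * s j + ∑ p ∈ M, -(s p.1 * (kM p)⁻) + ∑ p ∈ O, -(s p.1 * |kO p|) := by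
        simp only [sum_neg_distrib, sum_mul_eq_sum_mul_sum_fiberwise _ Prod.fst s, mul_sub,
          sum_sub_distrib, mul_comm (k _)]
        ring
    _ ≤ _ := by gcongr with p hp p hp <;> [exact hM p hp; exact hO p hp]

open Classical in
theorem stmt_17_general (n : ℕ) (k : Fin n → ℝ) (hk : ∀ j, 0 < k j)
    (M O : Finset (Fin n × Fin n)) (kM kO : Fin n × Fin n → ℝ)
    (s : Fin n → ℝ) (hs : ∀ j, 0 ≤ s j ∧ s j ≤ 1)
    (d : Fin n → ℝ) (hd : ∀ j, -1 ≤ d j ∧ d j ≤ 0)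
    (hnonneg : ∀ j : Fin n,
      k j - (∑ p ∈ M, if (p.1 = j ∨ p.2 = j) ∧ kM p < 0 then |kM p| else 0)
          - (∑ p ∈ O, if p.1 = j then |kO p| else 0) ≥ 0)
    (N K : ℝ)
    (hN : N = (∑ j, k j * s j) + (∑ p ∈ M, s p.1 * s p.2 * kM p)
        + (∑ p ∈ O, s p.1 * |d p.2| * kO p))
    (hKdef : K = (∑ j, k j) + (∑ p ∈ M, s p.1 * s p.2 * kM p)
        + (∑ p ∈ O, s p.1 * |d p.2| * kO p))
    (hKpos : 0 < K) :
    0 ≤ N / K ∧ N / K ≤ 1 := by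
  have hbudget : ∀ j, ∑ p ∈ M with p.1 = j, (kM p)⁻ + ∑ p ∈ O with p.1 = j, |kO p| ≤ k j := by
    intro j
    have hMj : ∑ p ∈ M with p.1 = j, (kM p)⁻
        ≤ ∑ p ∈ M, if (p.1 = j ∨ p.2 = j) ∧ kM p < 0 then |kM p| else 0 := by
      rw [sum_filter]
      refine sum_le_sum fun p _ ↦ ?_
      rw [negPart_eq_ite_lt]
      split_ifs <;> grind
    linarith [hnonneg j, sum_filter (s := O) (fun p ↦ p.1 = j) (fun p ↦ |kO p|)]
  have hNK : N ≤ K := by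
    have : ∑ j, k j * s j ≤ ∑ j, k j :=
      sum_le_sum fun j _ ↦ mul_le_of_le_one_right (hk j).le (hs j).2
    linarith
  have hN0 : 0 ≤ N := hN ▸ sum_mul_add_interaction_sums_nonneg k M O kM kO s hs d
    (fun j ↦ abs_le.2 ⟨(hd j).1, by linarith [(hd j).2]⟩) hbudget
  exact ⟨div_nonneg hN0 hKpos.le, (div_le_one hKpos).2 hNK⟩

open Classical in
theorem stmt_17 (n : ℕ) (k : Fin n → ℝ) (hk : ∀ j, 0 < k j)
    (M O : Finset (Fin n × Fin n)) (kM kO : Fin n × Fin n → ℝ)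
    (hO : ∀ p ∈ O, kO p < 0)
    (s : Fin n → ℝ) (hs : ∀ j, 0 ≤ s j ∧ s j ≤ 1)
    (d : Fin n → ℝ) (hd : ∀ j, -1 ≤ d j ∧ d j ≤ 0)
    (hnonneg : ∀ j : Fin n,
      k j - (∑ p ∈ M, if (p.1 = j ∨ p.2 = j) ∧ kM p < 0 then |kM p| else 0)
          - (∑ p ∈ O, if p.1 = j then |kO p| else 0) ≥ 0)
    (N K : ℝ)
    (hN : N = (∑ j, k j * s j) + (∑ p ∈ M, s p.1 * s p.2 * kM p)
        + (∑ p ∈ O, s p.1 * |d p.2| * kO p))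
    (hKdef : K = (∑ j, k j) + (∑ p ∈ M, s p.1 * s p.2 * kM p)
        + (∑ p ∈ O, s p.1 * |d p.2| * kO p))
    (hKpos : 0 < K) :
    0 ≤ N / K ∧ N / K ≤ 1 :=
  stmt_17_general n k hk M O kM kO s hs d hd hnonneg N K hN hKdef hKpos
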